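/- arXiv:2006.08753 — 6 statements merged into one kernel-verified Lean document; each statement's English description precedes it below -/
import Mathlib

section
/- (Posterior stability) For P-almost every sequence x ∈ 𝒳^ℕ sampled from P, the limit lim_{t→∞} w(Q | x_{<t}) of the posterior weight exists for every Q ∈ ℳ. -/
/-!
Write `ξ = ∑ w(Q) • Q` for the Bayes mixture. The posterior weight of `Q` is
`w(Q) · Q(x_{<t}) / ξ(x_{<t})`, and the likelihood ratio `Q(x_{<t}) / ξ(x_{<t})` is a nonnegative
`ξ`-supermartingale for the filtration generated by the prefixes, hence converges `ξ`-almost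
surely by Doob's theorem. Since `w(P) • P ≤ ξ`, the true measure `P` is absolutely continuous
with respect to `ξ`, so the convergence also holds `P`-almost surely, for all countably many `Q`
at once.
-/

open MeasureTheory Filter

/-- The cylinder set of infinite sequences agreeing with `x` on the first `t` coordinates,
i.e. the set of sequences beginning with the prefix `x_{<t}`. -/
def cyl {X : Type*} (x : ℕ → X) (t : ℕ) : Set (ℕ → X) := {y | ∀ i < t, y i = x i}

/-- `Q(x_{<t})`: the `Q`-measure of the cylinder set of sequences beginning with `x_{<t}`,
as a real number. -/
noncomputable def prefProb {X : Type*} [MeasurableSpace X]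
    (Q : Measure (ℕ → X)) (x : ℕ → X) (t : ℕ) : ℝ :=
  (Q (cyl x t)).toReal

/-- The posterior weight `w(Q i | x_{<t}) = w(Q i)·(Q i)(x_{<t}) / ∑_{j} w(Q j)·(Q j)(x_{<t})`. -/
noncomputable def post {X ι : Type*} [MeasurableSpace X]
    (w : ι → ℝ) (Q : ι → Measure (ℕ → X)) (i : ι) (x : ℕ → X) (t : ℕ) : ℝ :=
  w i * prefProb (Q i) x t / ∑' j, w j * prefProb (Q j) x t

theorem MeasureTheory.Supermartingale.exists_ae_tendsto_of_nonneg {Ω : Type*}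
    {m0 : MeasurableSpace Ω} {μ : Measure Ω} [IsFiniteMeasure μ] {ℱ : Filtration ℕ m0}
    {f : ℕ → Ω → ℝ} (hf : Supermartingale f ℱ μ) (hf0 : ∀ n, 0 ≤ᵐ[μ] f n) :
    ∀ᵐ ω ∂μ, ∃ c, Tendsto (fun n => f n ω) atTop (nhds c) := by
  have hbdd : ∀ n, eLpNorm ((-f) n) 1 μ ≤ (ENNReal.ofReal (∫ ω, f 0 ω ∂μ)).toNNReal := by
    intro n
    rw [ENNReal.coe_toNNReal ENNReal.ofReal_ne_top, Pi.neg_apply, eLpNorm_neg,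
      eLpNorm_one_eq_lintegral_enorm, ← ofReal_integral_norm_eq_lintegral_enorm (hf.integrable n),
      integral_congr_ae ((hf0 n).mono fun ω hω => Real.norm_of_nonneg hω)]
    refine ENNReal.ofReal_le_ofReal ?_
    simpa only [setIntegral_univ] using hf.setIntegral_le (Nat.zero_le n) MeasurableSet.univ
  filter_upwards [hf.neg.exists_ae_tendsto_of_bdd hbdd] with ω ⟨c, hc⟩
  exact ⟨-c, by simpa using hc.neg⟩

section Prefix

variable {X : Type*}

def seqPrefix (t : ℕ) (x : ℕ → X) : Fin t → X := fun i => x i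

def prefixCyl {t : ℕ} (p : Fin t → X) : Set (ℕ → X) := seqPrefix t ⁻¹' {p}

lemma cyl_eq_prefixCyl (x : ℕ → X) (t : ℕ) : cyl x t = prefixCyl (seqPrefix t x) := by
  ext y
  simp [cyl, prefixCyl, seqPrefix, funext_iff, Fin.forall_iff]

variable [MeasurableSpace X]

lemma measurable_seqPrefix (t : ℕ) : Measurable (seqPrefix (X := X) t) :=
  measurable_pi_lambda _ fun i => measurable_pi_apply (i : ℕ)

def prefixFiltration : Filtration ℕ (MeasurableSpace.pi : MeasurableSpace (ℕ → X)) where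
  seq t := MeasurableSpace.comap (seqPrefix t) inferInstance
  mono' s t hst := by
    let restrict : (Fin t → X) → Fin s → X := fun q i => q (Fin.castLE hst i)
    have hrestrict : Measurable restrict := measurable_pi_lambda _ fun i => measurable_pi_apply _
    show MeasurableSpace.comap (restrict ∘ seqPrefix t) _ ≤ MeasurableSpace.comap (seqPrefix t) _
    rw [← MeasurableSpace.comap_comp]
    exact MeasurableSpace.comap_mono hrestrict.comap_le
  le' t := (measurable_seqPrefix t).comap_le

variable [MeasurableSingletonClass X]

lemma measurableSet_prefixCyl {t : ℕ} (p : Fin t → X) : MeasurableSet (prefixCyl p) :=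
  measurable_seqPrefix t (measurableSet_singleton p)

lemma setIntegral_preimage_seqPrefix {ν : Measure (ℕ → X)} {f : (ℕ → X) → ℝ}
    (hf : Integrable f ν) {t : ℕ} (A : Finset (Fin t → X)) :
    ∫ x in seqPrefix t ⁻¹' A, f x ∂ν = ∑ p ∈ A, ∫ x in prefixCyl p, f x ∂ν := by
  rw [← Set.biUnion_preimage_singleton]
  exact integral_biUnion_finset A (fun p _ => measurableSet_prefixCyl p)
    (fun p _ q _ hpq => (Set.disjoint_singleton.2 hpq).preimage _) fun p _ => hf.integrableOn

end Prefix

section LikelihoodRatio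

variable {X : Type*} [MeasurableSpace X]

noncomputable def likelihoodRatio (μ ν : Measure (ℕ → X)) (t : ℕ) (x : ℕ → X) : ℝ :=
  μ.real (cyl x t) / ν.real (cyl x t)

variable (μ ν : Measure (ℕ → X))

lemma likelihoodRatio_nonneg (t : ℕ) (x : ℕ → X) : 0 ≤ likelihoodRatio μ ν t x :=
  div_nonneg measureReal_nonneg measureReal_nonneg

lemma likelihoodRatio_eq_comp (t : ℕ) : likelihoodRatio μ ν t =
    (fun p : Fin t → X => μ.real (prefixCyl p) / ν.real (prefixCyl p)) ∘ seqPrefix t := by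
  funext x
  simp only [likelihoodRatio, cyl_eq_prefixCyl, Function.comp_apply]

variable [MeasurableSingletonClass X]

lemma setIntegral_prefixCyl_likelihoodRatio {t : ℕ} (p : Fin t → X) :
    ∫ x in prefixCyl p, likelihoodRatio μ ν t x ∂ν =
      ν.real (prefixCyl p) * (μ.real (prefixCyl p) / ν.real (prefixCyl p)) := by
  rw [setIntegral_congr_fun (measurableSet_prefixCyl p) (fun x (hx : seqPrefix t x = p) => by
    rw [likelihoodRatio_eq_comp, Function.comp_apply, hx]), setIntegral_const, smul_eq_mul]

variable [Finite X] [IsFiniteMeasure ν]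

lemma integrable_likelihoodRatio (t : ℕ) : Integrable (likelihoodRatio μ ν t) ν := by
  rw [likelihoodRatio_eq_comp]
  exact Integrable.of_finite.comp_measurable (measurable_seqPrefix t)

variable [IsFiniteMeasure μ]

lemma setIntegral_prefixCyl_likelihoodRatio_succ_le {t : ℕ} (p : Fin t → X) :
    ∫ x in prefixCyl p, likelihoodRatio μ ν (t + 1) x ∂ν ≤
      ∫ x in prefixCyl p, likelihoodRatio μ ν t x ∂ν := by
  classical
  have := Fintype.ofFinite X
  by_cases hp : ν (prefixCyl p) = 0
  · simp [setIntegral_measure_zero _ hp]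
  have hp' : ν.real (prefixCyl p) ≠ 0 := by
    simpa [measureReal_def, ENNReal.toReal_eq_zero_iff] using hp
  set children : Finset (Fin (t + 1) → X) := {q | Fin.init q = p}
  have hchildren : prefixCyl p = seqPrefix (t + 1) ⁻¹' children := by
    ext x
    simp only [children, prefixCyl, Set.mem_preimage, Set.mem_singleton_iff, Finset.coe_filter,
      Finset.mem_univ, true_and, Set.mem_ofPred_eq]
    rfl
  calc ∫ x in prefixCyl p, likelihoodRatio μ ν (t + 1) x ∂ν
      = ∑ q ∈ children, ∫ x in prefixCyl q, likelihoodRatio μ ν (t + 1) x ∂ν := by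
        rw [hchildren, setIntegral_preimage_seqPrefix (integrable_likelihoodRatio μ ν _)]
    -- strict when `μ` charges a `ν`-null child: the ratio is only a supermartingale
    _ ≤ ∑ q ∈ children, μ.real (prefixCyl q) := by
        refine Finset.sum_le_sum fun q _ => ?_
        rw [setIntegral_prefixCyl_likelihoodRatio, mul_div_left_comm]
        exact mul_le_of_le_one_right measureReal_nonneg (div_self_le_one _)
    _ = μ.real (prefixCyl p) := by
        rw [hchildren]
        exact sum_measureReal_preimage_singleton _ fun q _ => measurableSet_prefixCyl q
    _ = ∫ x in prefixCyl p, likelihoodRatio μ ν t x ∂ν := by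
        rw [setIntegral_prefixCyl_likelihoodRatio, mul_div_cancel₀ _ hp']

theorem likelihoodRatio_supermartingale :
    Supermartingale (likelihoodRatio μ ν) prefixFiltration ν := by
  refine supermartingale_of_setIntegral_succ_le (fun t => ?_) (integrable_likelihoodRatio μ ν) ?_
  · rw [likelihoodRatio_eq_comp]
    exact (Measurable.of_discrete.comp (comap_measurable _)).stronglyMeasurable
  · rintro t _ ⟨A, -, rfl⟩
    rw [← A.toFinite.coe_toFinset,
      setIntegral_preimage_seqPrefix (integrable_likelihoodRatio μ ν _),
      setIntegral_preimage_seqPrefix (integrable_likelihoodRatio μ ν _)]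
    exact Finset.sum_le_sum fun p _ => setIntegral_prefixCyl_likelihoodRatio_succ_le μ ν p

theorem ae_tendsto_likelihoodRatio :
    ∀ᵐ x ∂ν, ∃ L, Tendsto (fun t => likelihoodRatio μ ν t x) atTop (nhds L) :=
  (likelihoodRatio_supermartingale μ ν).exists_ae_tendsto_of_nonneg
    fun t => ae_of_all _ (likelihoodRatio_nonneg μ ν t)

end LikelihoodRatio

section BayesMixture

variable {Ω ι : Type*} [MeasurableSpace Ω] {w : ι → ℝ} {Q : ι → Measure Ω}

noncomputable def bayesMixture (w : ι → ℝ) (Q : ι → Measure Ω) : Measure Ω :=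
  Measure.sum fun i => ENNReal.ofReal (w i) • Q i

lemma bayesMixture_apply {s : Set Ω} (hs : MeasurableSet s) :
    bayesMixture w Q s = ∑' i, ENNReal.ofReal (w i) * Q i s := by
  simp only [bayesMixture, Measure.sum_apply _ hs, Measure.smul_apply, smul_eq_mul]

lemma isFiniteMeasure_bayesMixture (hw0 : ∀ i, 0 ≤ w i) (hw : Summable w)
    [∀ i, IsProbabilityMeasure (Q i)] : IsFiniteMeasure (bayesMixture w Q) := by
  constructor
  rw [bayesMixture_apply MeasurableSet.univ]
  simp only [measure_univ, mul_one, ← ENNReal.ofReal_tsum_of_nonneg hw0 hw]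
  exact ENNReal.ofReal_lt_top

lemma absolutelyContinuous_bayesMixture {i : ι} (hw : 0 < w i) : Q i ≪ bayesMixture w Q :=
  Measure.absolutelyContinuous_sum_right i
    (Measure.absolutelyContinuous_smul (ENNReal.ofReal_pos.2 hw).ne')

end BayesMixture

lemma post_eq_mul_likelihoodRatio {X ι : Type*} [MeasurableSpace X] [MeasurableSingletonClass X]
    {w : ι → ℝ} (hw0 : ∀ i, 0 ≤ w i) {Q : ι → Measure (ℕ → X)} [∀ i, IsFiniteMeasure (Q i)]
    (i : ι) (x : ℕ → X) (t : ℕ) :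
    post w Q i x t = w i * likelihoodRatio (Q i) (bayesMixture w Q) t x := by
  have hmix : ∑' j, w j * prefProb (Q j) x t = (bayesMixture w Q).real (cyl x t) := by
    rw [measureReal_def, bayesMixture_apply (cyl_eq_prefixCyl x t ▸ measurableSet_prefixCyl _),
      ENNReal.tsum_toReal_eq fun j => ENNReal.mul_ne_top ENNReal.ofReal_ne_top (measure_ne_top _ _)]
    simp only [ENNReal.toReal_mul, ENNReal.toReal_ofReal (hw0 _), prefProb]
  rw [post, hmix, likelihoodRatio, mul_div_assoc, prefProb]
  rfl

theorem posterior_stability_general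
    {X : Type*} [Fintype X] [MeasurableSpace X] [MeasurableSingletonClass X]
    {ι : Type*} [Countable ι]
    (Q : ι → Measure (ℕ → X)) (hQ : ∀ i, IsProbabilityMeasure (Q i))
    (w : ι → ℝ) (hw : ∀ i, 0 < w i) (hw1 : ∑' i, w i = 1)
    (i₀ : ι) :
    ∀ᵐ x ∂(Q i₀), ∀ i : ι, ∃ L : ℝ,
      Tendsto (fun t => post w Q i x t) atTop (nhds L) := by
  have hw0 : ∀ i, 0 ≤ w i := fun i => (hw i).le
  have hsum : Summable w := by
    by_contra h
    simp [tsum_eq_zero_of_not_summable h] at hw1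
  have := isFiniteMeasure_bayesMixture hw0 hsum (Q := Q)
  have hconv : ∀ᵐ x ∂bayesMixture w Q, ∀ i, ∃ L,
      Tendsto (fun t => likelihoodRatio (Q i) (bayesMixture w Q) t x) atTop (nhds L) :=
    ae_all_iff.2 fun i => ae_tendsto_likelihoodRatio (Q i) _
  filter_upwards [absolutelyContinuous_bayesMixture (hw i₀) |>.ae_le hconv] with x hx i
  obtain ⟨L, hL⟩ := hx i
  exact ⟨w i * L, by simpa only [post_eq_mul_likelihoodRatio hw0] using hL.const_mul (w i)⟩

/-- **Posterior stability.** For `P`-almost every sequence sampled from the true measure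
`P = Q i₀ ∈ ℳ`, the limit `lim_{t→∞} w(Q | x_{<t})` of the posterior weight exists for
every `Q ∈ ℳ`. -/
theorem posterior_stability
    {X : Type*} [Fintype X] [Nonempty X] [MeasurableSpace X] [MeasurableSingletonClass X]
    {ι : Type*} [Countable ι]
    (Q : ι → Measure (ℕ → X)) (hQ : ∀ i, IsProbabilityMeasure (Q i))
    (w : ι → ℝ) (hw : ∀ i, 0 < w i) (hw1 : ∑' i, w i = 1)
    (i₀ : ι) :
    ∀ᵐ x ∂(Q i₀), ∀ i : ι, ∃ L : ℝ,
      Tendsto (fun t => post w Q i x t) atTop (nhds L) :=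
  posterior_stability_general Q hQ w hw hw1 i₀
end

section
/- (Value difference forces variation distance) Let P₁ and P₂ be probability measures on Ω = 𝒳^ℕ, let r : 𝒳 → [0,1], let γ ∈ (0,1), and define the discounted values V_i := (1−γ)·∑_{j=0}^{∞} γ^j · E_{P_i}[ r(x_j) ] for i = 1, 2. If |V₁ − V₂| > ε for some ε > 0, then d_k(P₁, P₂) > ε/2, where k = ⌈ log(ε/2) / log γ ⌉. -/
/-!
For `j < k` the reward `r(x_j)` is a `[0,1]`-valued function of `(x_0, …, x_{k-1})`, and such a
function has expectations differing by at most the mass difference on the set where one law of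
`(x_0, …, x_{k-1})` dominates the other; hence `|E_{P₁} r(x_j) - E_{P₂} r(x_j)| ≤ d_k(P₁, P₂)`.
The first `k` discounted terms therefore contribute at most `(1 - γ^k) d_k` to `|V₁ - V₂|` and the
tail at most `γ^k`, which the choice of `k` makes `≤ ε/2`.
-/

open MeasureTheory Filter

/-- The `k`-step variation distance between two measures on `𝒳^ℕ`:
`d_k(P₁, P₂) = max_{ℰ ⊆ 𝒳^k} |P₁[(x_0,…,x_{k−1}) ∈ ℰ] − P₂[(x_0,…,x_{k−1}) ∈ ℰ]|`. -/
noncomputable def dkStep {X : Type*} [MeasurableSpace X]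
    (P₁ P₂ : Measure (ℕ → X)) (k : ℕ) : ℝ :=
  ⨆ E : Set (Fin k → X),
    |(P₁ {y | (fun j : Fin k => y j) ∈ E}).toReal - (P₂ {y | (fun j : Fin k => y j) ∈ E}).toReal|

open Set

section FiniteSpace

variable {α : Type*} [Fintype α] [MeasurableSpace α] [MeasurableSingletonClass α]
  {μ ν : Measure α} [IsFiniteMeasure μ] [IsFiniteMeasure ν]

lemma exists_integral_sub_integral_le_measureReal_sub {h : α → ℝ} (hh : ∀ a, h a ∈ Icc 0 1) :
    ∃ E : Set α, ∫ a, h a ∂μ - ∫ a, h a ∂ν ≤ μ.real E - ν.real E := by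
  classical
  set F : Finset α := {a | ν.real {a} ≤ μ.real {a}}
  refine ⟨F, ?_⟩
  rw [integral_fintype .of_finite, integral_fintype .of_finite, ← sum_measureReal_singleton,
    ← sum_measureReal_singleton, ← Finset.sum_sub_distrib, ← Finset.sum_sub_distrib,
    Finset.sum_filter]
  refine Finset.sum_le_sum fun a _ => ?_
  obtain ⟨h0, h1⟩ := hh a
  simp only [smul_eq_mul, ← sub_mul]
  split_ifs with hle
  · exact mul_le_of_le_one_right (sub_nonneg.2 hle) h1
  · exact mul_nonpos_of_nonpos_of_nonneg (by linarith) h0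

lemma abs_integral_sub_integral_le_iSup {h : α → ℝ} (hh : ∀ a, h a ∈ Icc 0 1) :
    |∫ a, h a ∂μ - ∫ a, h a ∂ν| ≤ ⨆ E : Set α, |μ.real E - ν.real E| := by
  have hbdd : BddAbove (range fun E : Set α => |μ.real E - ν.real E|) :=
    (finite_range _).bddAbove
  obtain ⟨E, hE⟩ := exists_integral_sub_integral_le_measureReal_sub (μ := μ) (ν := ν) hh
  obtain ⟨E', hE'⟩ := exists_integral_sub_integral_le_measureReal_sub (μ := ν) (ν := μ) hh
  refine abs_sub_le_iff.2 ⟨le_ciSup_of_le hbdd E ?_, le_ciSup_of_le hbdd E' ?_⟩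
  · exact hE.trans (le_abs_self _)
  · exact hE'.trans ((le_abs_self _).trans_eq (abs_sub_comm _ _))

end FiniteSpace

section VariationDistance

variable {X : Type*} [MeasurableSpace X]

def initialSegment (k : ℕ) (y : ℕ → X) : Fin k → X := fun j => y j

lemma measurable_initialSegment (k : ℕ) : Measurable (initialSegment (X := X) k) :=
  measurable_pi_lambda _ fun _ => measurable_pi_apply _

variable (P₁ P₂ : Measure (ℕ → X)) (k : ℕ)

lemma dkStep_nonneg : 0 ≤ dkStep P₁ P₂ k :=
  Real.iSup_nonneg fun _ => abs_nonneg _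

variable [Fintype X] [MeasurableSingletonClass X]

lemma dkStep_eq_iSup_map :
    dkStep P₁ P₂ k = ⨆ E : Set (Fin k → X),
      |(P₁.map (initialSegment k)).real E - (P₂.map (initialSegment k)).real E| := by
  refine iSup_congr fun E => ?_
  rw [map_measureReal_apply (measurable_initialSegment k) E.to_countable.measurableSet,
    map_measureReal_apply (measurable_initialSegment k) E.to_countable.measurableSet]
  rfl

variable [IsFiniteMeasure P₁] [IsFiniteMeasure P₂]

lemma abs_integral_sub_integral_le_dkStep {f : (Fin k → X) → ℝ} (hf : ∀ v, f v ∈ Icc 0 1) :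
    |∫ y, f (initialSegment k y) ∂P₁ - ∫ y, f (initialSegment k y) ∂P₂| ≤ dkStep P₁ P₂ k := by
  have hmap := measurable_initialSegment (X := X) k
  have hf_meas := measurable_of_finite f
  rw [dkStep_eq_iSup_map, ← integral_map hmap.aemeasurable hf_meas.aestronglyMeasurable,
    ← integral_map hmap.aemeasurable hf_meas.aestronglyMeasurable]
  exact abs_integral_sub_integral_le_iSup hf

end VariationDistance

section DiscountedSum

variable {γ : ℝ} (hγ0 : 0 ≤ γ) (hγ1 : γ < 1)
include hγ0 hγ1

lemma summable_pow_mul_of_abs_le_one {c : ℕ → ℝ} (hc : ∀ j, |c j| ≤ 1) :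
    Summable fun j => γ ^ j * c j :=
  (summable_geometric_of_lt_one hγ0 hγ1).of_norm_bounded fun j => by
    rw [Real.norm_eq_abs, abs_mul, abs_pow, abs_of_nonneg hγ0]
    exact mul_le_of_le_one_right (by positivity) (hc j)

lemma mul_abs_tsum_pow_mul_le {c : ℕ → ℝ} (hc : ∀ j, |c j| ≤ 1) {k : ℕ} {D : ℝ}
    (hD : ∀ j < k, |c j| ≤ D) :
    (1 - γ) * |∑' j, γ ^ j * c j| ≤ (1 - γ ^ k) * D + γ ^ k := by
  have hhead : |∑ j ∈ Finset.range k, γ ^ j * c j| ≤ (∑ j ∈ Finset.range k, γ ^ j) * D := by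
    rw [Finset.sum_mul]
    refine (Finset.abs_sum_le_sum_abs _ _).trans (Finset.sum_le_sum fun j hj => ?_)
    rw [abs_mul, abs_pow, abs_of_nonneg hγ0]
    exact mul_le_mul_of_nonneg_left (hD j (Finset.mem_range.1 hj)) (pow_nonneg hγ0 j)
  have htail : |∑' j, γ ^ (j + k) * c (j + k)| ≤ γ ^ k * (1 - γ)⁻¹ :=
    tsum_of_norm_bounded (f := fun j => γ ^ (j + k) * c (j + k))
      ((hasSum_geometric_of_lt_one hγ0 hγ1).mul_left (γ ^ k)) fun j => by
      rw [Real.norm_eq_abs, abs_mul, abs_pow, abs_of_nonneg hγ0, pow_add, mul_comm (γ ^ k)]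
      exact mul_le_of_le_one_right (by positivity) (hc _)
  have h1γ : 0 < 1 - γ := sub_pos.2 hγ1
  rw [← (summable_pow_mul_of_abs_le_one hγ0 hγ1 hc).sum_add_tsum_nat_add k]
  calc (1 - γ) * |∑ j ∈ Finset.range k, γ ^ j * c j + ∑' j, γ ^ (j + k) * c (j + k)|
      ≤ (1 - γ) * ((∑ j ∈ Finset.range k, γ ^ j) * D + γ ^ k * (1 - γ)⁻¹) := by
        gcongr
        exact (abs_add_le _ _).trans (add_le_add hhead htail)
    _ = (1 - γ ^ k) * D + γ ^ k := by
        rw [mul_add, ← mul_assoc, mul_neg_geom_sum]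
        field_simp

lemma abs_sub_discounted_sum_le {a b : ℕ → ℝ} (ha : ∀ j, a j ∈ Icc 0 1)
    (hb : ∀ j, b j ∈ Icc 0 1) {k : ℕ} {D : ℝ} (hD : ∀ j < k, |a j - b j| ≤ D) :
    |(1 - γ) * ∑' j, γ ^ j * a j - (1 - γ) * ∑' j, γ ^ j * b j| ≤ (1 - γ ^ k) * D + γ ^ k := by
  have habs {x : ℝ} (hx : x ∈ Icc 0 1) : |x| ≤ 1 := abs_le.2 ⟨by linarith [hx.1], hx.2⟩
  rw [← mul_sub, ← (summable_pow_mul_of_abs_le_one hγ0 hγ1 fun j => habs (ha j)).tsum_sub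
    (summable_pow_mul_of_abs_le_one hγ0 hγ1 fun j => habs (hb j)), abs_mul,
    abs_of_pos (sub_pos.2 hγ1)]
  simp_rw [← mul_sub]
  exact mul_abs_tsum_pow_mul_le hγ0 hγ1
    (fun j => abs_sub_le_of_nonneg_of_le (ha j).1 (ha j).2 (hb j).1 (hb j).2) hD

end DiscountedSum

lemma pow_natCeil_log_div_log_le {γ δ : ℝ} (hγ0 : 0 < γ) (hγ1 : γ < 1) (hδ : 0 < δ) :
    γ ^ ⌈Real.log δ / Real.log γ⌉₊ ≤ δ := by
  rw [← Real.log_le_log_iff (by positivity) hδ, Real.log_pow]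
  exact (div_le_iff_of_neg (Real.log_neg hγ0 hγ1)).1 (Nat.le_ceil _)

lemma integral_mem_Icc_of_mem_Icc {α : Type*} [MeasurableSpace α] {μ : Measure α}
    [IsProbabilityMeasure μ] {f : α → ℝ} (hf : ∀ a, f a ∈ Icc 0 1) : ∫ a, f a ∂μ ∈ Icc 0 1 := by
  refine ⟨integral_nonneg fun a => (hf a).1, ?_⟩
  simpa using integral_mono_of_nonneg (μ := μ) (ae_of_all _ fun a => (hf a).1)
    (integrable_const 1) (ae_of_all _ fun a => (hf a).2)

theorem value_difference_forces_variation_distance_general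
    {X : Type*} [Fintype X] [MeasurableSpace X] [MeasurableSingletonClass X]
    (P₁ P₂ : Measure (ℕ → X)) [IsProbabilityMeasure P₁] [IsProbabilityMeasure P₂]
    (r : X → ℝ) (hr : ∀ a, r a ∈ Set.Icc (0:ℝ) 1)
    (γ : ℝ) (hγ : γ ∈ Set.Ioo (0:ℝ) 1)
    (ε : ℝ) (hε : 0 < ε)
    (hdiff : ε < |((1 - γ) * ∑' j : ℕ, γ ^ j * ∫ y, r (y j) ∂P₁)
                  - ((1 - γ) * ∑' j : ℕ, γ ^ j * ∫ y, r (y j) ∂P₂)|) :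
    ε / 2 < dkStep P₁ P₂ ⌈Real.log (ε / 2) / Real.log γ⌉₊ := by
  set k := ⌈Real.log (ε / 2) / Real.log γ⌉₊
  have hγk : γ ^ k ≤ ε / 2 := pow_natCeil_log_div_log_le hγ.1 hγ.2 (half_pos hε)
  have hexp (P : Measure (ℕ → X)) [IsProbabilityMeasure P] (j : ℕ) :
      ∫ y, r (y j) ∂P ∈ Icc 0 1 :=
    integral_mem_Icc_of_mem_Icc fun y => hr _
  have hvalue := abs_sub_discounted_sum_le hγ.1.le hγ.2 (hexp P₁) (hexp P₂) (k := k)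
    fun j hj => abs_integral_sub_integral_le_dkStep P₁ P₂ k (f := fun v => r (v ⟨j, hj⟩))
      fun _ => hr _
  have := mul_nonneg (pow_nonneg hγ.1.le k) (dkStep_nonneg P₁ P₂ k)
  linarith

/-- **Value difference forces variation distance.** Let `P₁, P₂` be probability measures on
`𝒳^ℕ`, `r : 𝒳 → [0,1]` a reward function, `γ ∈ (0,1)` a discount factor, and let
`V_i = (1−γ)·∑_j γ^j·E_{P_i}[r(x_j)]`. If `|V₁ − V₂| > ε > 0`, then
`d_k(P₁, P₂) > ε/2` for `k = ⌈log(ε/2)/log γ⌉`. -/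
theorem value_difference_forces_variation_distance
    {X : Type*} [Fintype X] [Nonempty X] [MeasurableSpace X] [MeasurableSingletonClass X]
    (P₁ P₂ : Measure (ℕ → X)) [IsProbabilityMeasure P₁] [IsProbabilityMeasure P₂]
    (r : X → ℝ) (hr : ∀ a, r a ∈ Set.Icc (0:ℝ) 1)
    (γ : ℝ) (hγ : γ ∈ Set.Ioo (0:ℝ) 1)
    (ε : ℝ) (hε : 0 < ε)
    (hdiff : ε < |((1 - γ) * ∑' j : ℕ, γ ^ j * ∫ y, r (y j) ∂P₁)
                  - ((1 - γ) * ∑' j : ℕ, γ ^ j * ∫ y, r (y j) ∂P₂)|) :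
    ε / 2 < dkStep P₁ P₂ ⌈Real.log (ε / 2) / Real.log γ⌉₊ :=
  value_difference_forces_variation_distance_general P₁ P₂ r hr γ hγ ε hε hdiff
end

section
/- (Policy domination scales variation distance) Fix finite nonempty sets 𝒜 (actions) and 𝒳 (observations) and a horizon k ∈ ℕ. A policy is a function π assigning to each partial history h ∈ (𝒜×𝒳)^j (j < k) a probability distribution π(·|h) over 𝒜; an environment is a function ν assigning to each partial history with a final action, h·a, a probability distribution ν(·|h,a) over 𝒳. These induce a probability distribution P^π_ν on (𝒜×𝒳)^k via P^π_ν((a_1,x_1,…,a_k,x_k)) = ∏_{j=1}^{k} π(a_j | h_{<j})·ν(x_j | h_{<j}, a_j), where h_{<j} = (a_1,x_1,…,a_{j−1},x_{j−1}). Let π₁, π₂ be policies, let ν, μ be environments, let c ∈ (0,1], and suppose π₁(a|h) ≥ c·π₂(a|h) for every action a and every partial history h. Then d_k(P^{π₁}_ν, P^{π₁}_μ) ≥ c^k · d_k(P^{π₂}_ν, P^{π₂}_μ). -/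
open Finset

/-- The probability that an interaction history `h ∈ (𝒜×𝒳)^k` is produced when actions are
sampled from the policy `π` and observations are sampled from the environment `ν`:
`P^π_ν(h) = ∏_{j<k} π(a_j | h_{<j}) · ν(x_j | h_{<j}, a_j)`. -/
noncomputable def histProb {A X : Type*}
    (π : (j : ℕ) → (Fin j → A × X) → A → ℝ)
    (ν : (j : ℕ) → (Fin j → A × X) → A → X → ℝ)
    (k : ℕ) (h : Fin k → A × X) : ℝ :=
  ∏ j : Fin k,
    (π j.1 (fun i => h (Fin.castLE j.isLt.le i)) (h j).1 *
     ν j.1 (fun i => h (Fin.castLE j.isLt.le i)) (h j).1 (h j).2)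

/-- The variation distance between two probability mass functions `p, q` on a finite type:
`d(p, q) = max_{ℰ} |p(ℰ) − q(ℰ)|`. -/
noncomputable def dFin {Y : Type*} [Fintype Y] (p q : Y → ℝ) : ℝ :=
  ⨆ E : Finset Y, |∑ y ∈ E, p y - ∑ y ∈ E, q y|

/-!
For a fixed policy `π`, `P^π_ν(h) − P^π_μ(h) = P^π(h) · (P_ν(h) − P_μ(h))`, where `P^π(h)` is the
product of the policy factors alone, and domination gives `c^k · P^{π₂}(h) ≤ P^{π₁}(h)`. Since the
variation distance equals `max (∑ (p − q)⁺) (∑ (p − q)⁻)`, multiplying the pointwise differences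
by weights `0 ≤ c^k · P^{π₂}(h) ≤ P^{π₁}(h)` scales both sums, hence the distance, monotonically.
-/

section PosPart

variable {α : Type*} [Ring α] [LinearOrder α] [IsOrderedRing α]

lemma posPart_mul_of_nonneg {a : α} (ha : 0 ≤ a) (b : α) : (a * b)⁺ = a * b⁺ := by
  rw [posPart_def, posPart_def, mul_max_of_nonneg _ _ ha, mul_zero]

lemma negPart_mul_of_nonneg {a : α} (ha : 0 ≤ a) (b : α) : (a * b)⁻ = a * b⁻ := by
  rw [negPart_def, negPart_def, mul_max_of_nonneg _ _ ha, mul_zero, mul_neg]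

end PosPart

section VariationDistance

variable {Y : Type*} [Fintype Y]

lemma abs_sum_sub_sum_le_dFin (p q : Y → ℝ) (E : Finset Y) :
    |∑ y ∈ E, p y - ∑ y ∈ E, q y| ≤ dFin p q :=
  le_ciSup (f := fun E : Finset Y => |∑ y ∈ E, p y - ∑ y ∈ E, q y|)
    (Set.finite_range _).bddAbove E

lemma dFin_eq_max_sum_posPart_sum_negPart (p q : Y → ℝ) :
    dFin p q = max (∑ y, (p y - q y)⁺) (∑ y, (p y - q y)⁻) := by
  apply le_antisymm
  · refine ciSup_le fun E => ?_
    rw [← sum_sub_distrib, abs_le']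
    constructor
    · calc ∑ y ∈ E, (p y - q y)
          ≤ ∑ y ∈ E, (p y - q y)⁺ := sum_le_sum fun y _ => le_posPart _
        _ ≤ ∑ y, (p y - q y)⁺ :=
          sum_le_sum_of_subset_of_nonneg (subset_univ E) fun y _ _ => posPart_nonneg _
        _ ≤ _ := le_max_left _ _
    · calc -∑ y ∈ E, (p y - q y)
          = ∑ y ∈ E, -(p y - q y) := (sum_neg_distrib _).symm
        _ ≤ ∑ y ∈ E, (p y - q y)⁻ := sum_le_sum fun y _ => neg_le_negPart _
        _ ≤ ∑ y, (p y - q y)⁻ :=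
          sum_le_sum_of_subset_of_nonneg (subset_univ E) fun y _ _ => negPart_nonneg _
        _ ≤ _ := le_max_right _ _
  · refine max_le ?_ ?_
    · calc ∑ y, (p y - q y)⁺
          = ∑ y with 0 ≤ p y - q y, (p y - q y) := by
            simp only [sum_filter, posPart_eq_ite]
        _ ≤ |∑ y with 0 ≤ p y - q y, (p y - q y)| := le_abs_self _
        _ ≤ dFin p q := by
          rw [sum_sub_distrib]; exact abs_sum_sub_sum_le_dFin p q _
    · calc ∑ y, (p y - q y)⁻
          = -∑ y with p y - q y ≤ 0, (p y - q y) := by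
            rw [sum_filter, ← sum_neg_distrib]
            exact sum_congr rfl fun y _ => by rw [negPart_eq_ite, apply_ite Neg.neg, neg_zero]
        _ ≤ |∑ y with p y - q y ≤ 0, (p y - q y)| := neg_le_abs _
        _ ≤ dFin p q := by
          rw [sum_sub_distrib]; exact abs_sum_sub_sum_le_dFin p q _

lemma mul_dFin_le_dFin_of_posPart_le {p₁ q₁ p₂ q₂ : Y → ℝ} {c : ℝ} (hc : 0 ≤ c)
    (hpos : ∀ y, c * (p₂ y - q₂ y)⁺ ≤ (p₁ y - q₁ y)⁺)
    (hneg : ∀ y, c * (p₂ y - q₂ y)⁻ ≤ (p₁ y - q₁ y)⁻) :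
    c * dFin p₂ q₂ ≤ dFin p₁ q₁ := by
  rw [dFin_eq_max_sum_posPart_sum_negPart, dFin_eq_max_sum_posPart_sum_negPart,
    mul_max_of_nonneg _ _ hc, mul_sum, mul_sum]
  exact max_le_max (sum_le_sum fun y _ => hpos y) (sum_le_sum fun y _ => hneg y)

lemma mul_dFin_le_dFin_of_sub_eq_mul {p₁ q₁ p₂ q₂ w₁ w₂ D : Y → ℝ} {c : ℝ} (hc : 0 ≤ c)
    (hw₂ : ∀ y, 0 ≤ w₂ y) (hw : ∀ y, c * w₂ y ≤ w₁ y)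
    (h₁ : ∀ y, p₁ y - q₁ y = w₁ y * D y) (h₂ : ∀ y, p₂ y - q₂ y = w₂ y * D y) :
    c * dFin p₂ q₂ ≤ dFin p₁ q₁ := by
  have hw₁ (y : Y) : 0 ≤ w₁ y := (mul_nonneg hc (hw₂ y)).trans (hw y)
  apply mul_dFin_le_dFin_of_posPart_le hc <;> intro y
  · rw [h₁, h₂, posPart_mul_of_nonneg (hw₁ y), posPart_mul_of_nonneg (hw₂ y), ← mul_assoc]
    exact mul_le_mul_of_nonneg_right (hw y) (posPart_nonneg _)
  · rw [h₁, h₂, negPart_mul_of_nonneg (hw₁ y), negPart_mul_of_nonneg (hw₂ y), ← mul_assoc]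
    exact mul_le_mul_of_nonneg_right (hw y) (negPart_nonneg _)

end VariationDistance

section HistoryProbability

variable {A X : Type*}

noncomputable def policyProb (π : (j : ℕ) → (Fin j → A × X) → A → ℝ) (k : ℕ)
    (h : Fin k → A × X) : ℝ :=
  ∏ j : Fin k, π j.1 (fun i => h (Fin.castLE j.isLt.le i)) (h j).1

noncomputable def envProb (ν : (j : ℕ) → (Fin j → A × X) → A → X → ℝ) (k : ℕ)
    (h : Fin k → A × X) : ℝ :=
  ∏ j : Fin k, ν j.1 (fun i => h (Fin.castLE j.isLt.le i)) (h j).1 (h j).2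

variable {k : ℕ}

lemma histProb_eq_policyProb_mul_envProb (π : (j : ℕ) → (Fin j → A × X) → A → ℝ)
    (ν : (j : ℕ) → (Fin j → A × X) → A → X → ℝ) (h : Fin k → A × X) :
    histProb π ν k h = policyProb π k h * envProb ν k h :=
  prod_mul_distrib

lemma histProb_sub_histProb (π : (j : ℕ) → (Fin j → A × X) → A → ℝ)
    (ν μ : (j : ℕ) → (Fin j → A × X) → A → X → ℝ) (h : Fin k → A × X) :
    histProb π ν k h - histProb π μ k h = policyProb π k h * (envProb ν k h - envProb μ k h) := by
  rw [histProb_eq_policyProb_mul_envProb, histProb_eq_policyProb_mul_envProb, mul_sub]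

lemma policyProb_nonneg {π : (j : ℕ) → (Fin j → A × X) → A → ℝ}
    (hπ : ∀ j h a, 0 ≤ π j h a) (h : Fin k → A × X) : 0 ≤ policyProb π k h :=
  prod_nonneg fun _ _ => hπ _ _ _

lemma pow_mul_policyProb_le {π₁ π₂ : (j : ℕ) → (Fin j → A × X) → A → ℝ} {c : ℝ} (hc : 0 ≤ c)
    (hπ₂ : ∀ j h a, 0 ≤ π₂ j h a) (hdom : ∀ j h a, c * π₂ j h a ≤ π₁ j h a)
    (h : Fin k → A × X) : c ^ k * policyProb π₂ k h ≤ policyProb π₁ k h := by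
  calc c ^ k * policyProb π₂ k h
      = ∏ j : Fin k, c * π₂ j.1 (fun i => h (Fin.castLE j.isLt.le i)) (h j).1 := by
        rw [prod_mul_distrib, prod_const, card_univ, Fintype.card_fin, policyProb]
    _ ≤ policyProb π₁ k h :=
        prod_le_prod (fun _ _ => mul_nonneg hc (hπ₂ _ _ _)) fun _ _ => hdom _ _ _

end HistoryProbability

theorem policy_domination_scales_variation_distance_general
    {A X : Type*} [Fintype A] [Fintype X]
    (k : ℕ)
    (π₁ π₂ : (j : ℕ) → (Fin j → A × X) → A → ℝ)
    (ν μ : (j : ℕ) → (Fin j → A × X) → A → X → ℝ)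
    (hπ₂nonneg : ∀ j h a, 0 ≤ π₂ j h a)
    (c : ℝ) (hc : c ∈ Set.Ioc (0:ℝ) 1)
    (hdom : ∀ j h a, c * π₂ j h a ≤ π₁ j h a) :
    c ^ k * dFin (histProb π₂ ν k) (histProb π₂ μ k)
      ≤ dFin (histProb π₁ ν k) (histProb π₁ μ k) :=
  mul_dFin_le_dFin_of_sub_eq_mul (pow_nonneg hc.1.le k) (policyProb_nonneg hπ₂nonneg)
    (pow_mul_policyProb_le hc.1.le hπ₂nonneg hdom) (histProb_sub_histProb π₁ ν μ)
    (histProb_sub_histProb π₂ ν μ)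

/-- **Policy domination scales variation distance.** Let `π₁, π₂` be policies and `ν, μ`
environments over finite action/observation spaces, with horizon `k`, and let `c ∈ (0,1]`
be such that `π₁(a|h) ≥ c·π₂(a|h)` for every action `a` and partial history `h`. Then
`d_k(P^{π₁}_ν, P^{π₁}_μ) ≥ c^k · d_k(P^{π₂}_ν, P^{π₂}_μ)`. -/
theorem policy_domination_scales_variation_distance
    {A X : Type*} [Fintype A] [Fintype X] [Nonempty A] [Nonempty X]
    (k : ℕ)
    (π₁ π₂ : (j : ℕ) → (Fin j → A × X) → A → ℝ)
    (ν μ : (j : ℕ) → (Fin j → A × X) → A → X → ℝ)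
    (hπ₁nonneg : ∀ j h a, 0 ≤ π₁ j h a) (hπ₁sum : ∀ j h, ∑ a, π₁ j h a = 1)
    (hπ₂nonneg : ∀ j h a, 0 ≤ π₂ j h a) (hπ₂sum : ∀ j h, ∑ a, π₂ j h a = 1)
    (hνnonneg : ∀ j h a x, 0 ≤ ν j h a x) (hνsum : ∀ j h a, ∑ x, ν j h a x = 1)
    (hμnonneg : ∀ j h a x, 0 ≤ μ j h a x) (hμsum : ∀ j h a, ∑ x, μ j h a x = 1)
    (c : ℝ) (hc : c ∈ Set.Ioc (0:ℝ) 1)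
    (hdom : ∀ j h a, c * π₂ j h a ≤ π₁ j h a) :
    c ^ k * dFin (histProb π₂ ν k) (histProb π₂ μ k)
      ≤ dFin (histProb π₁ ν k) (histProb π₁ μ k) :=
  policy_domination_scales_variation_distance_general k π₁ π₂ ν μ hπ₂nonneg c hc hdom
end

section
/- (Alternation bound in the coin-flip example) Let γ ∈ (0,1), K ∈ ℕ with K ≥ 1, t ∈ ℕ, and let a : ℕ → {heads, tails} be a sequence of actions with per-step rewards r_j = 1 if a_j = heads and r_j = 1/2 if a_j = tails. Suppose a_t = tails and that for every k < K the window average satisfies (1/(k+1))·∑_{j=0}^{k} [a_{t+j} = heads] ≤ 1/2. Then the K-step truncated discounted return satisfies (1−γ)·∑_{i=0}^{K−1} γ^i · r_{t+i} ≤ (1−γ)·∑_{i=0}^{K−1} γ^i · (1/2 + (1/2)·[i is odd]). -/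
open Finset

private lemma abel_id (w f : ℕ → ℝ) (K : ℕ) :
    ∑ i ∈ Finset.range K, w i * f i =
      ∑ k ∈ Finset.range K, (w k - w (k+1)) * (∑ i ∈ Finset.range (k+1), f i)
        + w K * ∑ i ∈ Finset.range K, f i := by
  induction K with
  | zero => simp
  | succ K ih =>
    rw [Finset.sum_range_succ (fun i => w i * f i) K, ih,
        Finset.sum_range_succ (fun k => (w k - w (k+1)) * ∑ i ∈ Finset.range (k+1), f i) K,
        Finset.sum_range_succ f K]
    ring

private lemma odd_sum (m : ℕ) :
    ∑ j ∈ Finset.range m, (if Odd j then (1:ℝ) else 0) = ((m / 2 : ℕ) : ℝ) := by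
  induction m with
  | zero => simp
  | succ m ih =>
    rw [Finset.sum_range_succ, ih]
    rcases Nat.even_or_odd m with h | h
    · rw [if_neg (by simpa using h)]
      obtain ⟨c, rfl⟩ := h
      have : (c + c + 1) / 2 = (c + c) / 2 := by omega
      rw [this, add_zero]
    · rw [if_pos h]
      obtain ⟨c, rfl⟩ := h
      have : (2 * c + 1 + 1) / 2 = (2 * c + 1) / 2 + 1 := by omega
      rw [this]
      push_cast
      ring

/-- **Alternation bound in the coin-flip example.** Actions are booleans (`true` = heads,
`false` = tails); the per-step reward is `1` for heads and `1/2` for tails. If `a t = tails`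
and every window average of heads starting at `t` of length at most `K` is at most `1/2`,
then the `K`-step truncated discounted return starting at `t` is at most that of the
alternating sequence tails, heads, tails, heads, …. -/
theorem alternation_bound
    (γ : ℝ) (hγ : γ ∈ Set.Ioo (0:ℝ) 1)
    (K : ℕ) (hK : 1 ≤ K) (t : ℕ) (a : ℕ → Bool)
    (hat : a t = false)
    (hwin : ∀ k < K,
      (∑ j ∈ Finset.range (k + 1), (if a (t + j) = true then (1:ℝ) else 0)) / (k + 1)
        ≤ 1 / 2) :
    (1 - γ) * ∑ i ∈ Finset.range K, γ ^ i * (if a (t + i) = true then (1:ℝ) else 1 / 2)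
      ≤ (1 - γ) * ∑ i ∈ Finset.range K, γ ^ i * (1 / 2 + if Odd i then (1:ℝ)/2 else 0) := by
  obtain ⟨hγ0, hγ1⟩ := hγ
  have hcard : ∀ m : ℕ, ∑ j ∈ Finset.range m, (if a (t + j) = true then (1:ℝ) else 0) =
      (((Finset.range m).filter (fun j => a (t + j) = true)).card : ℝ) := by
    intro m
    simp [Finset.sum_boole]
  -- partial sum domination
  have hpart : ∀ m ≤ K, ∑ j ∈ Finset.range m, (if a (t + j) = true then (1:ℝ) else 0)
      ≤ ∑ j ∈ Finset.range m, (if Odd j then (1:ℝ) else 0) := by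
    intro m hm
    rcases Nat.eq_zero_or_pos m with rfl | hm0
    · simp
    obtain ⟨k, rfl⟩ := Nat.exists_eq_add_of_lt hm0
    simp only [zero_add] at *
    have hw := hwin k (by omega)
    rw [hcard] at hw ⊢
    rw [odd_sum]
    set c := ((Finset.range (k+1)).filter (fun j => a (t + j) = true)).card with hc
    have hk1 : (0:ℝ) < (k:ℝ) + 1 := by positivity
    rw [div_le_div_iff₀ hk1 (by norm_num)] at hw
    have h2c : 2 * c ≤ k + 1 := by
      have : (2 * c : ℝ) ≤ (k + 1 : ℝ) := by push_cast; linarith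
      exact_mod_cast this
    have : c ≤ (k + 1) / 2 := by omega
    exact_mod_cast this
  -- rewrite rewards
  have hL : ∀ i : ℕ, (if a (t + i) = true then (1:ℝ) else 1 / 2)
      = 1/2 + (1/2) * (if a (t + i) = true then (1:ℝ) else 0) := by
    intro i; split <;> norm_num
  have hR : ∀ i : ℕ, (1/2 + if Odd i then (1:ℝ)/2 else 0)
      = 1/2 + (1/2) * (if Odd i then (1:ℝ) else 0) := by
    intro i; split <;> norm_num
  simp only [hL, hR, mul_add, Finset.sum_add_distrib]
  have hxy : ∑ i ∈ Finset.range K, γ ^ i * (if a (t + i) = true then (1:ℝ) else 0)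
      ≤ ∑ i ∈ Finset.range K, γ ^ i * (if Odd i then (1:ℝ) else 0) := by
    rw [abel_id (fun i => γ ^ i) _ K, abel_id (fun i => γ ^ i) _ K]
    have hco : ∀ k : ℕ, (0:ℝ) ≤ γ ^ k - γ ^ (k+1) := by
      intro k
      have : γ ^ (k+1) ≤ γ ^ k * 1 := by
        rw [pow_succ]
        exact mul_le_mul_of_nonneg_left (le_of_lt hγ1) (by positivity)
      linarith [this]
    refine add_le_add (Finset.sum_le_sum ?_) ?_
    · intro k hk
      simp only [Finset.mem_range] at hk
      exact mul_le_mul_of_nonneg_left (hpart (k+1) (by omega)) (hco k)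
    · exact mul_le_mul_of_nonneg_left (hpart K le_rfl) (by positivity)
  have hpos : (0:ℝ) < 1 - γ := by linarith
  have key : ∑ i ∈ Finset.range K, γ ^ i * ((1:ℝ)/2 * (if a (t + i) = true then (1:ℝ) else 0))
      ≤ ∑ i ∈ Finset.range K, γ ^ i * ((1:ℝ)/2 * (if Odd i then (1:ℝ) else 0)) := by
    have e1 : ∀ f : ℕ → ℝ, ∑ i ∈ Finset.range K, γ ^ i * ((1:ℝ)/2 * f i)
        = (1/2) * ∑ i ∈ Finset.range K, γ ^ i * f i := by
      intro f; rw [Finset.mul_sum]; exact Finset.sum_congr rfl (fun i _ => by ring)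
    rw [e1, e1]
    linarith [hxy]
  nlinarith [key, hpos]
end

section
/- (High return forces a heads-heavy window) Let γ ∈ (0,1), let ε := (1/2 − γ/(1+γ))/2 > 0, and let K := ⌈ log(ε/2) / log γ ⌉. Let a : ℕ → {heads, tails} with per-step rewards r_j = 1 if a_j = heads and r_j = 1/2 if a_j = tails, and define R_t := (1−γ)·∑_{i=0}^{∞} γ^i · r_{t+i}. If a_t = tails and R_t ≥ 3/4 − ε/2, then there exists k < K such that (1/(k+1))·∑_{j=0}^{k} [a_{t+j} = heads] ≥ 1/2 + 1/(2K). -/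
open Finset

set_option maxHeartbeats 1600000


lemma abel_identity (γ : ℝ) (d : ℕ → ℝ) (n : ℕ) :
    ∑ i ∈ range n, γ ^ i * d i
      = ∑ m ∈ range n, (γ ^ m - γ ^ (m + 1)) * ∑ j ∈ range (m + 1), d j
        + γ ^ n * ∑ j ∈ range n, d j := by
  induction n with
  | zero => simp
  | succ n ih =>
      rw [sum_range_succ (fun i => γ ^ i * d i), ih,
        sum_range_succ (fun m => (γ ^ m - γ ^ (m + 1)) * ∑ j ∈ range (m + 1), d j),
        sum_range_succ d n]
      ring

lemma abel_nonneg (γ : ℝ) (h0 : 0 ≤ γ) (h1 : γ ≤ 1) (d : ℕ → ℝ) (n : ℕ)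
    (hD : ∀ m ≤ n, 0 ≤ ∑ j ∈ range m, d j) :
    0 ≤ ∑ i ∈ range n, γ ^ i * d i := by
  rw [abel_identity]
  have h2 : 0 ≤ γ ^ n * ∑ j ∈ range n, d j :=
    mul_nonneg (pow_nonneg h0 n) (hD n le_rfl)
  have h3 : 0 ≤ ∑ m ∈ range n, (γ ^ m - γ ^ (m + 1)) * ∑ j ∈ range (m + 1), d j := by
    apply sum_nonneg
    intro m hm
    have hp := pow_le_pow_of_le_one h0 h1 (Nat.le_add_right m 1)
    exact mul_nonneg (by linarith) (hD (m + 1) (mem_range.mp hm))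
  linarith

lemma odd_geom_sum (γ : ℝ) (n : ℕ) :
    ∑ i ∈ range (2 * n), γ ^ i * (if Odd i then (1:ℝ) else 0)
      = γ * ∑ j ∈ range n, (γ ^ 2) ^ j := by
  induction n with
  | zero => simp
  | succ n ih =>
      have h2n : 2 * (n + 1) = (2 * n + 1) + 1 := by ring
      rw [h2n, sum_range_succ, sum_range_succ, ih, sum_range_succ]
      have h1 : ¬ Odd (2 * n) := by simp [Nat.odd_iff, Nat.mul_mod_right]
      have h2 : Odd (2 * n + 1) := ⟨n, by ring⟩
      rw [if_neg h1, if_pos h2, pow_succ, pow_mul]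
      ring

lemma odd_count (m : ℕ) : ∑ j ∈ range m, (if Odd j then (1:ℝ) else 0) = (m / 2 : ℕ) := by
  induction m with
  | zero => simp
  | succ m ih =>
      rw [sum_range_succ, ih]
      by_cases hm : Odd m
      · rw [if_pos hm]
        have h2 : m % 2 = 1 := Nat.odd_iff.mp hm
        have : (m + 1) / 2 = m / 2 + 1 := by omega
        rw [this]; push_cast; ring
      · rw [if_neg hm]
        have h2 : m % 2 = 0 := Nat.even_iff.mp (Nat.not_odd_iff_even.mp hm)
        have : (m + 1) / 2 = m / 2 := by omega
        rw [this]; ring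

/-- **High return forces a heads-heavy window.** Actions are booleans (`true` = heads,
`false` = tails); the per-step reward is `1` for heads and `1/2` for tails, and
`R_t = (1−γ)·∑_i γ^i·r_{t+i}`. With `ε = (1/2 − γ/(1+γ))/2` and `K = ⌈log(ε/2)/log γ⌉`:
if `a t = tails` and `R_t ≥ 3/4 − ε/2`, then some window average of heads starting at `t`
of length `k + 1 ≤ K` is at least `1/2 + 1/(2K)`. -/
theorem high_return_forces_heads_heavy_window
    (γ : ℝ) (hγ : γ ∈ Set.Ioo (0:ℝ) 1)
    (ε : ℝ) (hε : ε = (1 / 2 - γ / (1 + γ)) / 2)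
    (K : ℕ) (hKdef : K = ⌈Real.log (ε / 2) / Real.log γ⌉₊)
    (a : ℕ → Bool) (t : ℕ) (hat : a t = false)
    (hR : 3 / 4 - ε / 2
        ≤ (1 - γ) * ∑' i : ℕ, γ ^ i * (if a (t + i) = true then (1:ℝ) else 1 / 2)) :
    ∃ k < K,
      (1 / 2 + 1 / (2 * K) : ℝ)
        ≤ (∑ j ∈ Finset.range (k + 1), (if a (t + j) = true then (1:ℝ) else 0)) / (k + 1) := by
  obtain ⟨hγ0, hγ1⟩ := hγ
  have h1γ : (0:ℝ) < 1 + γ := by linarith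
  have h1γ' : (0:ℝ) < 1 - γ := by linarith
  have hεpos : 0 < ε := by
    have : γ / (1 + γ) < 1 / 2 := by rw [div_lt_iff₀ h1γ]; linarith
    rw [hε]; linarith
  have hεlt : ε < 1 := by
    have : 0 < γ / (1 + γ) := div_pos hγ0 h1γ
    rw [hε]; linarith
  have hlogγ : Real.log γ < 0 := Real.log_neg hγ0 hγ1
  have hlogε : Real.log (ε / 2) < 0 := Real.log_neg (by linarith) (by linarith)
  have hKpos : 0 < K := by
    rw [hKdef]
    exact Nat.ceil_pos.mpr (div_pos_of_neg_of_neg hlogε hlogγ)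
  have hγK : γ ^ K ≤ ε / 2 := by
    have h1 : Real.log (ε / 2) / Real.log γ ≤ (K : ℝ) := by
      rw [hKdef]; exact Nat.le_ceil _
    have h2 : (K : ℝ) * Real.log γ ≤ Real.log (ε / 2) := by
      rwa [div_le_iff_of_neg hlogγ] at h1
    calc γ ^ K = Real.exp (Real.log (γ ^ K)) :=
          (Real.exp_log (pow_pos hγ0 K)).symm
      _ = Real.exp ((K : ℝ) * Real.log γ) := by rw [Real.log_pow]
      _ ≤ Real.exp (Real.log (ε / 2)) := Real.exp_le_exp.mpr h2
      _ = ε / 2 := Real.exp_log (by linarith)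
  by_contra hcon
  push_neg at hcon
  -- natural-number head counts
  set N : ℕ → ℕ := fun m => ∑ j ∈ range m, (if a (t + j) = true then 1 else 0) with hN
  have hcast : ∀ m, (N m : ℝ) = ∑ j ∈ range m, (if a (t + j) = true then (1:ℝ) else 0) := by
    intro m
    rw [hN]
    push_cast
    rfl
  have hKR : (0:ℝ) < (K : ℝ) := by exact_mod_cast hKpos
  -- all partial head counts are at most half the window
  have hNle : ∀ m, m ≤ K → 2 * N m ≤ m := by
    intro m hm
    rcases Nat.eq_zero_or_pos m with h0 | h0
    · simp [h0, hN]
    · by_contra hc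
      push_neg at hc
      obtain ⟨k, rfl⟩ : ∃ k, m = k + 1 := ⟨m - 1, by omega⟩
      have hk : k < K := by omega
      have hlt := hcon k hk
      rw [← hcast (k + 1)] at hlt
      have hNk : ((k:ℝ) + 1) + 1 ≤ 2 * (N (k + 1) : ℝ) := by exact_mod_cast hc
      have hKk : (k:ℝ) + 1 ≤ (K : ℝ) := by exact_mod_cast hk
      have hkpos : (0:ℝ) < (k:ℝ) + 1 := by positivity
      have e1 : 1 / (2 * (K:ℝ)) ≤ 1 / (2 * ((k:ℝ) + 1)) := by
        apply one_div_le_one_div_of_le (by positivity)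
        linarith
      have e2 : (1:ℝ) / 2 + 1 / (2 * ((k:ℝ) + 1)) ≤ (N (k + 1) : ℝ) / ((k:ℝ) + 1) := by
        rw [le_div_iff₀ hkpos]
        have heq : ((1:ℝ) / 2 + 1 / (2 * ((k:ℝ) + 1))) * ((k:ℝ) + 1) = ((k:ℝ) + 2) / 2 := by
          field_simp
          ring
        rw [heq]
        linarith
      have : ((N (k+1) : ℝ)) / ((k:ℝ) + 1) < 1 / 2 + 1 / (2 * (K:ℝ)) := by
        exact_mod_cast hlt
      linarith
  -- compare against the alternating pattern
  have hDnn : ∀ m ≤ K, 0 ≤ ∑ j ∈ range m,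
      ((if Odd j then (1:ℝ) else 0) - (if a (t + j) = true then (1:ℝ) else 0)) := by
    intro m hm
    rw [sum_sub_distrib, odd_count, ← hcast]
    have : N m ≤ m / 2 := by have := hNle m hm; omega
    have : (N m : ℝ) ≤ ((m / 2 : ℕ) : ℝ) := by exact_mod_cast this
    linarith
  have habel := abel_nonneg γ hγ0.le hγ1.le
      (fun j => (if Odd j then (1:ℝ) else 0) - (if a (t + j) = true then (1:ℝ) else 0)) K hDnn
  have hsplit : ∑ i ∈ range K,
        γ ^ i * ((if Odd i then (1:ℝ) else 0) - (if a (t + i) = true then (1:ℝ) else 0))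
      = ∑ i ∈ range K, γ ^ i * (if Odd i then (1:ℝ) else 0)
        - ∑ i ∈ range K, γ ^ i * (if a (t + i) = true then (1:ℝ) else 0) := by
    rw [← sum_sub_distrib]
    exact sum_congr rfl fun i _ => by ring
  rw [hsplit] at habel
  -- bound the alternating sum
  have hγ2 : γ ^ 2 < 1 := by nlinarith
  have hγ2' : (0:ℝ) < 1 - γ ^ 2 := by linarith
  have hoddK : ∑ i ∈ range K, γ ^ i * (if Odd i then (1:ℝ) else 0) ≤ γ / (1 - γ ^ 2) := by
    have hsub : ∑ i ∈ range K, γ ^ i * (if Odd i then (1:ℝ) else 0)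
        ≤ ∑ i ∈ range (2 * K), γ ^ i * (if Odd i then (1:ℝ) else 0) := by
      apply sum_le_sum_of_subset_of_nonneg (range_subset_range.mpr (by omega))
      intro i _ _
      exact mul_nonneg (pow_nonneg hγ0.le _) (by split <;> norm_num)
    rw [odd_geom_sum] at hsub
    have hgeo : ∑ j ∈ range K, (γ ^ 2) ^ j ≤ 1 / (1 - γ ^ 2) := by
      rw [geom_sum_eq (ne_of_lt hγ2) K]
      rw [show ((γ ^ 2) ^ K - 1) / (γ ^ 2 - 1) = (1 - (γ ^ 2) ^ K) / (1 - γ ^ 2) from by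
        rw [← neg_div_neg_eq]; ring_nf]
      rw [div_le_div_iff_of_pos_right hγ2']
      have : (0:ℝ) ≤ (γ ^ 2) ^ K := by positivity
      linarith
    calc ∑ i ∈ range K, γ ^ i * (if Odd i then (1:ℝ) else 0)
        ≤ γ * ∑ j ∈ range K, (γ ^ 2) ^ j := hsub
      _ ≤ γ * (1 / (1 - γ ^ 2)) := by
          apply mul_le_mul_of_nonneg_left hgeo hγ0.le
      _ = γ / (1 - γ ^ 2) := by ring
  have hfin : ∑ i ∈ range K, γ ^ i * (if a (t + i) = true then (1:ℝ) else 0)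
      ≤ γ / (1 - γ ^ 2) := by linarith
  -- summability
  have hsum_g : Summable (fun i : ℕ => γ ^ i) := summable_geometric_of_lt_one hγ0.le hγ1
  have hsum_h : Summable (fun i : ℕ => γ ^ i * (if a (t + i) = true then (1:ℝ) else 0)) := by
    apply Summable.of_nonneg_of_le
      (fun i => mul_nonneg (pow_nonneg hγ0.le _) (by split <;> norm_num))
      (fun i => ?_) hsum_g
    have : (if a (t + i) = true then (1:ℝ) else 0) ≤ 1 := by split <;> norm_num
    nlinarith [pow_nonneg hγ0.le i]
  have hsum_r : Summable (fun i : ℕ => γ ^ i * (if a (t + i) = true then (1:ℝ) else 1 / 2)) := by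
    apply Summable.of_nonneg_of_le
      (fun i => mul_nonneg (pow_nonneg hγ0.le _) (by split <;> norm_num))
      (fun i => ?_) hsum_g
    have : (if a (t + i) = true then (1:ℝ) else 1 / 2) ≤ 1 := by split <;> norm_num
    nlinarith [pow_nonneg hγ0.le i]
  set H : ℝ := ∑' i : ℕ, γ ^ i * (if a (t + i) = true then (1:ℝ) else 0) with hH
  -- decompose the return
  have hdecomp : ∀ i : ℕ, γ ^ i * (if a (t + i) = true then (1:ℝ) else 1 / 2)
      = (1 / 2) * γ ^ i + (1 / 2) * (γ ^ i * (if a (t + i) = true then (1:ℝ) else 0)) := by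
    intro i; by_cases hi : a (t + i) = true <;> simp [hi] <;> ring
  have hT : ∑' i : ℕ, γ ^ i * (if a (t + i) = true then (1:ℝ) else 1 / 2)
      = (1 / 2) * (1 - γ)⁻¹ + (1 / 2) * H := by
    rw [tsum_congr hdecomp, Summable.tsum_add (hsum_g.mul_left _) (hsum_h.mul_left _),
      tsum_mul_left, tsum_mul_left, tsum_geometric_of_lt_one hγ0.le hγ1, hH]
  have hinv : (1 - γ) * (1 - γ)⁻¹ = 1 := mul_inv_cancel₀ (ne_of_gt h1γ')
  have hHlb : 1 / 2 - ε ≤ (1 - γ) * H := by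
    rw [hT] at hR
    nlinarith
  -- split H at K and bound the tail
  have hsplitH : ∑ i ∈ range K, γ ^ i * (if a (t + i) = true then (1:ℝ) else 0)
      + ∑' i : ℕ, γ ^ (i + K) * (if a (t + (i + K)) = true then (1:ℝ) else 0) = H := by
    rw [hH]
    exact Summable.sum_add_tsum_nat_add K hsum_h
  have htail : ∑' i : ℕ, γ ^ (i + K) * (if a (t + (i + K)) = true then (1:ℝ) else 0)
      ≤ γ ^ K * (1 - γ)⁻¹ := by
    have hb : ∀ i : ℕ, γ ^ (i + K) * (if a (t + (i + K)) = true then (1:ℝ) else 0)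
        ≤ γ ^ K * γ ^ i := by
      intro i
      have h1 : (if a (t + (i + K)) = true then (1:ℝ) else 0) ≤ 1 := by split <;> norm_num
      have h2 : (0:ℝ) ≤ γ ^ (i + K) := pow_nonneg hγ0.le _
      calc γ ^ (i + K) * (if a (t + (i + K)) = true then (1:ℝ) else 0)
          ≤ γ ^ (i + K) * 1 := mul_le_mul_of_nonneg_left h1 h2
        _ = γ ^ K * γ ^ i := by rw [mul_one, pow_add]; ring
    have hsum_tail : Summable (fun i : ℕ => γ ^ (i + K) * (if a (t + (i + K)) = true then (1:ℝ) else 0)) :=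
      Summable.of_nonneg_of_le
        (fun i => mul_nonneg (pow_nonneg hγ0.le _) (by split <;> norm_num)) hb (hsum_g.mul_left _)
    calc ∑' i : ℕ, γ ^ (i + K) * (if a (t + (i + K)) = true then (1:ℝ) else 0)
        ≤ ∑' i : ℕ, γ ^ K * γ ^ i :=
          Summable.tsum_le_tsum hb hsum_tail (hsum_g.mul_left _)
      _ = γ ^ K * (1 - γ)⁻¹ := by
          rw [tsum_mul_left, tsum_geometric_of_lt_one hγ0.le hγ1]
  have hkey : (1 - γ) * H ≤ γ / (1 + γ) + γ ^ K := by
    have h1 : H ≤ γ / (1 - γ ^ 2) + γ ^ K * (1 - γ)⁻¹ := by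
      rw [← hsplitH]; linarith
    have h2 : (1 - γ) * (γ / (1 - γ ^ 2)) = γ / (1 + γ) := by
      field_simp
      ring
    have h3 : (1 - γ) * (γ ^ K * (1 - γ)⁻¹) = γ ^ K := by
      field_simp
    calc (1 - γ) * H ≤ (1 - γ) * (γ / (1 - γ ^ 2) + γ ^ K * (1 - γ)⁻¹) :=
          mul_le_mul_of_nonneg_left h1 h1γ'.le
      _ = γ / (1 + γ) + γ ^ K := by rw [mul_add, h2, h3]
  have hfrac : γ / (1 + γ) = 1 / 2 - 2 * ε := by rw [hε]; ring
  linarith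
end

section
/- (Diverging from the Mentor, deterministic core) Let γ ∈ (0,1) and let a : ℕ → {heads, tails} with per-step rewards r_j = 1 if a_j = heads and r_j = 1/2 if a_j = tails, and define R_t := (1−γ)·∑_{i=0}^{∞} γ^i · r_{t+i}. If liminf_{t→∞} R_t ≥ 3/4, then liminf_{t→∞} (1/t)·∑_{k=1}^{t} [a_k = heads] > 1/2; indeed the liminf is at least 1/2 + 1/(2K), where K := ⌈ log(ε/2) / log γ ⌉ and ε := (1/2 − γ/(1+γ))/2. -/
open Finset Filter

private lemma sum_weighted_comparison (w x : ℕ → ℝ) (hw0 : ∀ i, 0 ≤ w i)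
    (hwa : ∀ i, w (i+1) ≤ w i) :
    ∀ n, (∀ p, p ≤ n → 0 ≤ ∑ i ∈ range p, x i) →
      w n * ∑ i ∈ range n, x i ≤ ∑ i ∈ range n, w i * x i := by
  intro n
  induction n with
  | zero => simp
  | succ n ih =>
    intro h
    have h1 := ih (fun p hp => h p (hp.trans (Nat.le_succ n)))
    have hXn1 : 0 ≤ ∑ i ∈ range (n+1), x i := h (n+1) le_rfl
    rw [Finset.sum_range_succ] at hXn1
    rw [Finset.sum_range_succ, Finset.sum_range_succ]
    have step1 : w (n+1) * (∑ i ∈ range n, x i + x n) ≤ w n * (∑ i ∈ range n, x i + x n) :=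
      mul_le_mul_of_nonneg_right (hwa n) hXn1
    have e : w n * (∑ i ∈ range n, x i + x n)
        = w n * ∑ i ∈ range n, x i + w n * x n := by ring
    linarith

private lemma evens_identity (γ : ℝ) : ∀ K : ℕ,
    (1 + γ) * ∑ i ∈ range K, (if Even i then γ ^ i else 0) =
      (∑ i ∈ range K, γ ^ i) + (if Even K then 0 else γ ^ K) := by
  intro K
  induction K with
  | zero => simp
  | succ n ih =>
    rw [Finset.sum_range_succ, Finset.sum_range_succ, mul_add, ih]
    rcases Nat.even_or_odd n with he | ho
    · have h1 : ¬ Even (n+1) := by simp [Nat.even_add_one, he]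
      simp only [if_pos he, if_neg h1]
      rw [pow_succ]
      ring
    · have h2 : ¬ Even n := Nat.not_even_iff_odd.mpr ho
      have h1 : Even (n+1) := Odd.add_one ho
      simp only [if_neg h2, if_pos h1]
      ring

private lemma evens_count : ∀ p : ℕ, (∑ i ∈ range p, if Even i then 1 else 0 : ℕ) = (p+1)/2 := by
  intro p
  induction p with
  | zero => simp
  | succ n ih =>
    rw [Finset.sum_range_succ, ih]
    rcases Nat.even_or_odd n with he | ho
    · rw [if_pos he]
      obtain ⟨k, hk⟩ := he
      omega
    · rw [if_neg (Nat.not_even_iff_odd.mpr ho)]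
      obtain ⟨k, hk⟩ := ho
      omega

private lemma chunks_bound (a : ℕ → Bool) (K N : ℕ) (hK : 0 < K) (hN : 0 < N)
    (h : ∀ t, N ≤ t → ∃ p, 0 < p ∧ p ≤ K ∧ p < 2 * ∑ i ∈ range p, (if a (t+i) then 1 else 0)) :
    ∀ T, N + K ≤ T →
      (K+1) * (T - (K+N)) ≤ 2*K*(∑ k ∈ Icc 1 T, if a k then 1 else 0) := by
  have h' : ∀ t, ∃ p, 0 < p ∧ p ≤ K ∧
      (N ≤ t → p < 2 * ∑ i ∈ range p, (if a (t+i) then 1 else 0)) := by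
    intro t
    by_cases ht : N ≤ t
    · obtain ⟨p, h1, h2, h3⟩ := h t ht
      exact ⟨p, h1, h2, fun _ => h3⟩
    · exact ⟨1, Nat.one_pos, hK, fun c => absurd c ht⟩
  choose p hp1 hp2 hp3 using h'
  set g : ℕ → ℕ := fun n => Nat.rec N (fun _ acc => acc + p acc) n with hg
  have hg0 : g 0 = N := rfl
  have hgs : ∀ n, g (n+1) = g n + p (g n) := fun n => rfl
  have hgN : ∀ n, N + n ≤ g n := by
    intro n
    induction n with
    | zero => simp [hg0]
    | succ n ih => have := hp1 (g n); rw [hgs]; omega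
  have key : ∀ n, (K+1) * (g n - N) ≤ 2*K*(∑ k ∈ Ico N (g n), if a k then 1 else 0) := by
    intro n
    induction n with
    | zero => rw [hg0]; simp
    | succ n ih =>
      have hNg : N ≤ g n := le_trans (Nat.le_add_right N n) (hgN n)
      have hle : g n ≤ g (n+1) := by rw [hgs]; omega
      have hsplit : (∑ k ∈ Ico N (g (n+1)), if a k then 1 else 0)
          = (∑ k ∈ Ico N (g n), if a k then 1 else 0)
            + ∑ k ∈ Ico (g n) (g (n+1)), (if a k then 1 else 0) :=
        (Finset.sum_Ico_consecutive _ hNg hle).symm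
      have hre : (∑ k ∈ Ico (g n) (g (n+1)), if a k then 1 else 0)
          = ∑ i ∈ range (p (g n)), (if a (g n + i) then 1 else 0) := by
        rw [hgs, Finset.sum_Ico_eq_sum_range]
        simp
      have hchunk : p (g n) < 2 * ∑ k ∈ Ico (g n) (g (n+1)), (if a k then 1 else 0) := by
        rw [hre]; exact hp3 (g n) hNg
      have hgd : g (n+1) - N = (g n - N) + p (g n) := by rw [hgs]; omega
      rw [hsplit, hgd]
      have hKp : (K+1) * p (g n) ≤ K * (p (g n) + 1) := by
        have h2 := hp2 (g n)
        calc (K+1) * p (g n) = K * p (g n) + p (g n) := by ring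
          _ ≤ K * p (g n) + K := by omega
          _ = K * (p (g n) + 1) := by ring
      have hKc : K * (p (g n) + 1)
          ≤ K * (2 * ∑ k ∈ Ico (g n) (g (n+1)), (if a k then 1 else 0)) :=
        Nat.mul_le_mul_left K (by omega)
      calc (K+1) * ((g n - N) + p (g n))
          = (K+1) * (g n - N) + (K+1) * p (g n) := by ring
        _ ≤ 2*K*(∑ k ∈ Ico N (g n), if a k then 1 else 0)
            + K * (2 * ∑ k ∈ Ico (g n) (g (n+1)), (if a k then 1 else 0)) :=
            Nat.add_le_add ih (hKp.trans hKc)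
        _ = 2*K*((∑ k ∈ Ico N (g n), if a k then 1 else 0)
            + ∑ k ∈ Ico (g n) (g (n+1)), (if a k then 1 else 0)) := by ring
  intro T hT
  have hcross : ∃ n, T + 1 < g n := ⟨T+2, by have := hgN (T+2); omega⟩
  obtain ⟨n, hn2⟩ : ∃ n, T+1 < g (n+1) ∧ g n ≤ T + 1 := by
    have hspec := Nat.find_spec hcross
    have hpos : Nat.find hcross ≠ 0 := by
      intro h0
      rw [h0, hg0] at hspec
      omega
    refine ⟨Nat.find hcross - 1, ?_, ?_⟩
    · have heq : Nat.find hcross - 1 + 1 = Nat.find hcross := by omega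
      rw [heq]; exact hspec
    · have := Nat.find_min hcross (m := Nat.find hcross - 1) (by omega)
      omega
  have hgK : g (n+1) ≤ g n + K := by rw [hgs]; have := hp2 (g n); omega
  have hNg : N ≤ g n := le_trans (Nat.le_add_right N n) (hgN n)
  have hmono : T - (K+N) ≤ g n - N := by omega
  have hsub : (∑ k ∈ Ico N (g n), if a k then 1 else 0)
      ≤ ∑ k ∈ Icc 1 T, (if a k then 1 else 0) := by
    apply Finset.sum_le_sum_of_subset
    intro k hk
    simp only [Finset.mem_Ico] at hk
    simp only [Finset.mem_Icc]
    omega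
  calc (K+1) * (T - (K+N)) ≤ (K+1) * (g n - N) := Nat.mul_le_mul_left _ hmono
    _ ≤ 2*K*(∑ k ∈ Ico N (g n), if a k then 1 else 0) := key n
    _ ≤ 2*K*(∑ k ∈ Icc 1 T, if a k then 1 else 0) := Nat.mul_le_mul_left _ hsub

private lemma R_repr (γ : ℝ) (hγ0 : 0 < γ) (hγ1 : γ < 1) (a : ℕ → Bool) (t : ℕ) :
    (1-γ) * ∑' i : ℕ, γ^i * (if a (t+i) = true then (1:ℝ) else 1/2)
      = 1 - (1-γ)/2 * ∑' i : ℕ, γ^i * (if a (t+i) = true then (0:ℝ) else 1) := by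
  have hsum1 : Summable (fun i : ℕ => γ^i) := summable_geometric_of_lt_one hγ0.le hγ1
  have hsum2 : Summable (fun i : ℕ => γ^i * (if a (t+i) = true then (0:ℝ) else 1)) := by
    apply Summable.of_nonneg_of_le (fun i => ?_) (fun i => ?_) hsum1
    · by_cases h : a (t+i) <;> simp [h] <;> positivity
    · by_cases h : a (t+i) <;> simp [h] <;> positivity
  have heq : (fun i : ℕ => γ^i * (if a (t+i) = true then (1:ℝ) else 1/2))
      = fun i => γ^i - (γ^i * (if a (t+i) = true then (0:ℝ) else 1))/2 := by
    funext i; by_cases h : a (t+i) <;> simp [h] <;> ring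
  rw [heq, Summable.tsum_sub hsum1 (hsum2.div_const 2), tsum_div_const,
    tsum_geometric_of_lt_one hγ0.le hγ1]
  have h1γ : (1:ℝ) - γ ≠ 0 := by intro h; linarith [sub_eq_zero.mp h]
  field_simp


private lemma window_heads (γ ε : ℝ) (hγ0 : 0 < γ) (hγ1 : γ < 1)
    (hεγ : 4*ε*(1+γ) = 1 - γ) (hε0 : 0 < ε) (K : ℕ) (hγK : γ^K ≤ ε/2) (a : ℕ → Bool) (t : ℕ)
    (hRt : 3/4 - ε/2 < (1-γ) * ∑' i : ℕ, γ^i * (if a (t+i) = true then (1:ℝ) else 1/2)) :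
    ∃ p, 0 < p ∧ p ≤ K ∧ p < 2 * ∑ i ∈ range p, (if a (t+i) then 1 else 0) := by
  have h1γ : (0:ℝ) < 1 + γ := by linarith
  by_contra hcon
  push_neg at hcon
  have hdom : ∀ p, p ≤ K → 2 * (∑ i ∈ range p, if a (t+i) then 1 else 0) ≤ p := by
    intro p hp
    rcases Nat.eq_zero_or_pos p with h0 | h0
    · subst h0; simp
    · exact hcon p h0 hp
  -- prefix sums of (tails - evens) are nonneg
  have hqsum : ∀ p : ℕ, (∑ i ∈ range p, (if a (t+i) = true then (0:ℝ) else 1))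
      = (p:ℝ) - ((∑ i ∈ range p, if a (t+i) then 1 else 0 : ℕ) : ℝ) := by
    intro p
    induction p with
    | zero => simp
    | succ m ih =>
      rw [Finset.sum_range_succ, Finset.sum_range_succ, ih]
      push_cast
      by_cases h : a (t+m) <;> simp [h] <;> ring
  have hersum : ∀ p : ℕ, (∑ i ∈ range p, (if Even i then (1:ℝ) else 0))
      = (((p+1)/2 : ℕ) : ℝ) := by
    intro p
    rw [← evens_count p]
    push_cast
    rfl
  have hpre : ∀ p, p ≤ K →
      0 ≤ ∑ i ∈ range p, ((if a (t+i) = true then (0:ℝ) else 1) - (if Even i then (1:ℝ) else 0)) := by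
    intro p hp
    rw [Finset.sum_sub_distrib, hersum p, hqsum p]
    have hd := hdom p hp
    have hn : ((p+1)/2 : ℕ) + (∑ i ∈ range p, if a (t+i) then 1 else 0) ≤ p := by omega
    have hcast : ((((p:ℕ)+1)/2 : ℕ) : ℝ)
        + ((∑ i ∈ range p, if a (t+i) then 1 else 0 : ℕ) : ℝ) ≤ (p:ℝ) := by
      exact_mod_cast hn
    linarith
  have hcomp := sum_weighted_comparison (fun i => γ^i)
      (fun i => (if a (t+i) = true then (0:ℝ) else 1) - (if Even i then (1:ℝ) else 0))
      (fun i => by positivity)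
      (fun i => pow_le_pow_of_le_one hγ0.le hγ1.le (Nat.le_succ i)) K hpre
  have h0le : 0 ≤ ∑ i ∈ range K,
      γ^i * ((if a (t+i) = true then (0:ℝ) else 1) - (if Even i then (1:ℝ) else 0)) :=
    le_trans (mul_nonneg (by positivity) (hpre K le_rfl)) hcomp
  have hsplit2 : ∑ i ∈ range K,
        γ^i * ((if a (t+i) = true then (0:ℝ) else 1) - (if Even i then (1:ℝ) else 0))
      = (∑ i ∈ range K, γ^i * (if a (t+i) = true then (0:ℝ) else 1))
        - ∑ i ∈ range K, (if Even i then γ^i else 0) := by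
    rw [← Finset.sum_sub_distrib]
    apply Finset.sum_congr rfl
    intro i _
    by_cases h : Even i <;> by_cases h2 : a (t+i) <;> simp [h, h2]
  have hgeom : ∑ i ∈ range K, γ^i = (1 - γ^K)/(1-γ) := by
    rw [geom_sum_eq (ne_of_lt hγ1),
      show (1:ℝ)-γ^K = -(γ^K-1) by ring, show (1:ℝ)-γ = -(γ-1) by ring, neg_div_neg_eq]
  have hSeven : (1 - γ^K)/((1-γ)*(1+γ)) ≤ ∑ i ∈ range K, (if Even i then γ^i else 0) := by
    have hid := evens_identity γ K
    have hind : (0:ℝ) ≤ (if Even K then 0 else γ^K) := by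
      by_cases h : Even K <;> simp [h] <;> positivity
    rw [div_le_iff₀ (by nlinarith)]
    have hne : (1:ℝ) - γ ≠ 0 := by intro h0; linarith [sub_eq_zero.mp h0]
    calc 1 - γ^K = ((1-γ^K)/(1-γ)) * (1-γ) := (div_mul_cancel₀ _ hne).symm
      _ ≤ ((∑ i ∈ range K, γ^i) + (if Even K then 0 else γ^K)) * (1-γ) := by
          rw [← hgeom] at *
          apply mul_le_mul_of_nonneg_right (by linarith) (by linarith)
      _ = ((1+γ) * ∑ i ∈ range K, (if Even i then γ^i else 0)) * (1-γ) := by rw [hid]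
      _ = (∑ i ∈ range K, (if Even i then γ^i else 0)) * ((1-γ)*(1+γ)) := by ring
  have hsum1 : Summable (fun i : ℕ => γ^i) := summable_geometric_of_lt_one hγ0.le hγ1
  have hsum2 : Summable (fun i : ℕ => γ^i * (if a (t+i) = true then (0:ℝ) else 1)) := by
    apply Summable.of_nonneg_of_le (fun i => ?_) (fun i => ?_) hsum1
    · by_cases h : a (t+i) <;> simp [h] <;> positivity
    · by_cases h : a (t+i) <;> simp [h] <;> positivity
  have hTq : (∑ i ∈ range K, γ^i * (if a (t+i) = true then (0:ℝ) else 1))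
      ≤ ∑' i : ℕ, γ^i * (if a (t+i) = true then (0:ℝ) else 1) := by
    apply Summable.sum_le_tsum _ (fun i _ => ?_) hsum2
    by_cases h : a (t+i) <;> simp [h] <;> positivity
  rw [R_repr γ hγ0 hγ1 a t] at hRt
  set Tq := ∑' i : ℕ, γ^i * (if a (t+i) = true then (0:ℝ) else 1) with hTqdef
  have hchain : (1 - γ^K)/((1-γ)*(1+γ)) ≤ Tq := by
    refine le_trans hSeven (le_trans ?_ hTq)
    linarith [h0le, hsplit2.symm.le, hsplit2.le]
  have hdenom : (0:ℝ) < (1-γ)*(1+γ) := by nlinarith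
  have hfin : 1 - γ^K ≤ Tq * ((1-γ)*(1+γ)) := (div_le_iff₀ hdenom).mp hchain
  have hA : (1-γ) * Tq < 1/2 + ε := by linarith
  have hprod : ((1-γ) * Tq) * (1+γ) < (1/2 + ε) * (1+γ) :=
    mul_lt_mul_of_pos_right hA h1γ
  nlinarith [hfin, hprod, hγK, hεγ, hε0, hγ0, hγ1]

/-- **Diverging from the Mentor (deterministic core).** Actions are booleans (`true` = heads,
`false` = tails); the per-step reward is `1` for heads and `1/2` for tails, and
`R_t = (1−γ)·∑_i γ^i·r_{t+i}`. If `liminf_{t→∞} R_t ≥ 3/4`, then the liminf of the running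
frequency of heads `(1/t)·∑_{k=1}^t [a_k = heads]` exceeds `1/2`; indeed it is at least
`1/2 + 1/(2K)`, where `K = ⌈log(ε/2)/log γ⌉` and `ε = (1/2 − γ/(1+γ))/2`. -/
theorem diverging_from_the_mentor
    (γ : ℝ) (hγ : γ ∈ Set.Ioo (0:ℝ) 1)
    (ε : ℝ) (hε : ε = (1 / 2 - γ / (1 + γ)) / 2)
    (K : ℕ) (hKdef : K = ⌈Real.log (ε / 2) / Real.log γ⌉₊)
    (a : ℕ → Bool)
    (hR : 3 / 4 ≤ Filter.liminf
        (fun t => (1 - γ) * ∑' i : ℕ, γ ^ i * (if a (t + i) = true then (1:ℝ) else 1 / 2))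
        atTop) :
    (1 / 2 : ℝ) < Filter.liminf
        (fun t => (∑ k ∈ Finset.Icc 1 t, (if a k = true then (1:ℝ) else 0)) / t) atTop ∧
    (1 / 2 + 1 / (2 * K) : ℝ) ≤ Filter.liminf
        (fun t => (∑ k ∈ Finset.Icc 1 t, (if a k = true then (1:ℝ) else 0)) / t) atTop := by
  obtain ⟨hγ0, hγ1⟩ := hγ
  have h1γ : (0:ℝ) < 1 + γ := by linarith
  have hεγ : 4*ε*(1+γ) = 1 - γ := by
    rw [hε]; field_simp; ring
  have hε0 : 0 < ε := by nlinarith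
  have hεlt : ε/2 < 1 := by nlinarith
  have hγK : γ^K ≤ ε/2 := by
    have hlogγ : Real.log γ < 0 := Real.log_neg hγ0 hγ1
    have hx : Real.log (ε/2) / Real.log γ ≤ (K:ℝ) := by
      rw [hKdef]; exact Nat.le_ceil _
    have hKlog : (K:ℝ) * Real.log γ ≤ Real.log (ε/2) := (div_le_iff_of_neg hlogγ).mp hx
    have hlog2 : Real.log (γ^K) ≤ Real.log (ε/2) := by
      rw [Real.log_pow]; exact_mod_cast hKlog
    have hexp := Real.exp_le_exp.mpr hlog2
    rwa [Real.exp_log (by positivity), Real.exp_log (by positivity)] at hexp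
  have hK1 : 1 ≤ K := by
    rcases Nat.eq_zero_or_pos K with h0 | h0
    · rw [h0] at hγK; simp at hγK; linarith
    · exact h0
  -- R is bounded above by 1
  have hsum1 : Summable (fun i : ℕ => γ^i) := summable_geometric_of_lt_one hγ0.le hγ1
  have hRub : ∀ t : ℕ, (1-γ) * ∑' i : ℕ, γ^i * (if a (t+i) = true then (1:ℝ) else 1/2) ≤ 1 := by
    intro t
    have hs : Summable (fun i : ℕ => γ^i * (if a (t+i) = true then (1:ℝ) else 1/2)) := by
      apply Summable.of_nonneg_of_le (fun i => ?_) (fun i => ?_) hsum1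
      · by_cases h : a (t+i) <;> simp [h] <;> positivity
      · by_cases h : a (t+i) <;> simp [h]
        nlinarith [pow_nonneg hγ0.le i]
    have hle : (∑' i : ℕ, γ^i * (if a (t+i) = true then (1:ℝ) else 1/2)) ≤ (1-γ)⁻¹ := by
      rw [← tsum_geometric_of_lt_one hγ0.le hγ1]
      apply Summable.tsum_le_tsum (fun i => ?_) hs hsum1
      by_cases h : a (t+i) <;> simp [h]
      nlinarith [pow_nonneg hγ0.le i]
    calc (1-γ) * ∑' i : ℕ, γ^i * (if a (t+i) = true then (1:ℝ) else 1/2)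
        ≤ (1-γ) * (1-γ)⁻¹ := mul_le_mul_of_nonneg_left hle (by linarith)
      _ = 1 := mul_inv_cancel₀ (by intro h0; linarith [sub_eq_zero.mp h0])
  have hRlb : ∀ t : ℕ, 0 ≤ (1-γ) * ∑' i : ℕ, γ^i * (if a (t+i) = true then (1:ℝ) else 1/2) := by
    intro t
    apply mul_nonneg (by linarith)
    apply tsum_nonneg
    intro i
    by_cases h : a (t+i) <;> simp [h] <;> positivity
  have hcoR : IsBoundedUnder (· ≥ ·) atTop
      (fun t : ℕ => (1-γ) * ∑' i : ℕ, γ^i * (if a (t+i) = true then (1:ℝ) else 1/2)) :=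
    Filter.isBoundedUnder_of ⟨0, hRlb⟩
  have hev : ∀ᶠ t : ℕ in atTop, 3/4 - ε/2
      < (1-γ) * ∑' i : ℕ, γ^i * (if a (t+i) = true then (1:ℝ) else 1/2) :=
    Filter.eventually_lt_of_lt_liminf (lt_of_lt_of_le (by linarith) hR) hcoR
  obtain ⟨N₀, hN₀⟩ := Filter.eventually_atTop.mp hev
  set N := max N₀ 1 with hNdef
  have hstep : ∀ t, N ≤ t →
      ∃ p, 0 < p ∧ p ≤ K ∧ p < 2 * ∑ i ∈ range p, (if a (t+i) then 1 else 0) := by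
    intro t ht
    exact window_heads γ ε hγ0 hγ1 hεγ hε0 K hγK a t
      (hN₀ t (le_trans (le_max_left _ _) ht))
  have hchunks := chunks_bound a K N (by omega) (by omega) hstep
  have hKR : (0:ℝ) < (K:ℝ) := by exact_mod_cast hK1
  have hNR : (0:ℝ) ≤ (N:ℝ) := Nat.cast_nonneg N
  -- lower bound for the frequency
  have hlow : ∀ T : ℕ, N + K ≤ T →
      ((K:ℝ)+1) * ((T:ℝ) - ((K:ℝ)+(N:ℝ))) / (2*(K:ℝ)) / (T:ℝ)
        ≤ (∑ k ∈ Finset.Icc 1 T, (if a k = true then (1:ℝ) else 0)) / (T:ℝ) := by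
    intro T hT
    have hnat := hchunks T hT
    have h1 : (((K+1) * (T - (K+N)) : ℕ) : ℝ)
        ≤ ((2*K*(∑ k ∈ Icc 1 T, if a k then 1 else 0) : ℕ) : ℝ) := by exact_mod_cast hnat
    rw [Nat.cast_mul, Nat.cast_mul, Nat.cast_mul, Nat.cast_sub (by omega : K+N ≤ T)] at h1
    push_cast at h1
    have hT0 : (0:ℝ) < (T:ℝ) := by
      have : 0 < T := by omega
      exact_mod_cast this
    gcongr
    rw [div_le_iff₀ (by positivity)]
    linarith
  -- the lower-bound function tends to c
  set c : ℝ := 1/2 + 1/(2*(K:ℝ)) with hcdef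
  have hc' : ((K:ℝ)+1)/(2*(K:ℝ)) = c := by rw [hcdef]; field_simp
  have hz : Tendsto (fun T : ℕ => ((K:ℝ)+(N:ℝ))/(T:ℝ)) atTop (nhds 0) :=
    tendsto_const_div_atTop_nhds_zero_nat _
  have hψ : Tendsto (fun T : ℕ => ((K:ℝ)+1)/(2*(K:ℝ)) * (1 - ((K:ℝ)+(N:ℝ))/(T:ℝ)))
      atTop (nhds c) := by
    have h2 : Tendsto (fun T : ℕ => 1 - ((K:ℝ)+(N:ℝ))/(T:ℝ)) atTop (nhds (1 - 0)) :=
      Tendsto.sub tendsto_const_nhds hz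
    have h3 := h2.const_mul (((K:ℝ)+1)/(2*(K:ℝ)))
    rw [← hc']
    simpa using h3
  have hφψ : (fun T : ℕ => ((K:ℝ)+1)/(2*(K:ℝ)) * (1 - ((K:ℝ)+(N:ℝ))/(T:ℝ)))
      =ᶠ[atTop] (fun T : ℕ => ((K:ℝ)+1) * ((T:ℝ) - ((K:ℝ)+(N:ℝ))) / (2*(K:ℝ)) / (T:ℝ)) := by
    filter_upwards [eventually_gt_atTop 0] with T hT
    have hT0 : (T:ℝ) ≠ 0 := by
      have : (0:ℝ) < (T:ℝ) := by exact_mod_cast hT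
      linarith
    field_simp
  have hφ : Tendsto (fun T : ℕ => ((K:ℝ)+1) * ((T:ℝ) - ((K:ℝ)+(N:ℝ))) / (2*(K:ℝ)) / (T:ℝ))
      atTop (nhds c) := Filter.Tendsto.congr' hφψ hψ
  have hliminfφ := hφ.liminf_eq
  have hboundf : IsBoundedUnder (· ≥ ·) atTop
      (fun t : ℕ => (∑ k ∈ Finset.Icc 1 t, (if a k = true then (1:ℝ) else 0)) / t) := by
    apply Filter.isBoundedUnder_of
    refine ⟨0, fun t => ?_⟩
    apply div_nonneg _ (Nat.cast_nonneg t)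
    apply Finset.sum_nonneg
    intro k _
    by_cases h : a k <;> simp [h]
  have hbφ : IsBoundedUnder (· ≥ ·) atTop
      (fun T : ℕ => ((K:ℝ)+1) * ((T:ℝ) - ((K:ℝ)+(N:ℝ))) / (2*(K:ℝ)) / (T:ℝ)) :=
    hφ.isBoundedUnder_ge
  have hfub : ∀ t : ℕ,
      (∑ k ∈ Finset.Icc 1 t, (if a k = true then (1:ℝ) else 0)) / t ≤ 1 := by
    intro t
    rcases Nat.eq_zero_or_pos t with h0 | h0
    · subst h0; simp
    · have ht0 : (0:ℝ) < (t:ℝ) := by exact_mod_cast h0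
      rw [div_le_one ht0]
      calc (∑ k ∈ Finset.Icc 1 t, (if a k = true then (1:ℝ) else 0))
          ≤ ∑ k ∈ Finset.Icc 1 t, (1:ℝ) := by
            apply Finset.sum_le_sum
            intro k _
            by_cases h : a k <;> simp [h]
        _ = t := by simp [Nat.card_Icc]
  have hcof : IsCoboundedUnder (· ≥ ·) atTop
      (fun t : ℕ => (∑ k ∈ Finset.Icc 1 t, (if a k = true then (1:ℝ) else 0)) / t) :=
    Filter.IsBoundedUnder.isCoboundedUnder_ge (Filter.isBoundedUnder_of ⟨1, hfub⟩)
  have hmain : c ≤ liminf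
      (fun t : ℕ => (∑ k ∈ Finset.Icc 1 t, (if a k = true then (1:ℝ) else 0)) / t) atTop := by
    rw [← hliminfφ]
    exact liminf_le_liminf (eventually_atTop.mpr ⟨N+K, hlow⟩) hbφ hcof
  constructor
  · have hpos : (0:ℝ) < 1/(2*(K:ℝ)) := by positivity
    calc (1/2:ℝ) < c := by rw [hcdef]; linarith
      _ ≤ _ := hmain
  · exact hmain
end
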